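/- Let R be a left (n,d)-coherent and left self-FP_n^{≤d}-injective ring with d finite. Then every finitely n-presented R-module of projective dimension at most d is projective, i.e., FP_n^{≤d}(R) equals the class of finitely generated projective R-modules. -/

import Mathlib

universe u

/-- `M` is a finitely `n`-presented `R`-module. -/
def FinNPres (R : Type u) [Ring R] : ℕ → (M : Type u) → [AddCommGroup M] → [Module R M] → Prop
  | 0, M, _, _ => Module.Finite R M
  | n+1, M, _, _ => ∃ (k : ℕ) (f : (Fin k → R) →ₗ[R] M), Function.Surjective f ∧
      FinNPres R n (LinearMap.ker f)

/-- `M` has projective dimension at most `d` (finite `d`). -/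
def ProjDimLE (R : Type u) [Ring R] : ℕ → (M : Type u) → [AddCommGroup M] → [Module R M] → Prop
  | 0, M, _, _ => Module.Projective R M
  | d+1, M, _, _ => ∃ (ι : Type u) (f : (ι →₀ R) →ₗ[R] M), Function.Surjective f ∧
      ProjDimLE R d (LinearMap.ker f)

/-- Projective dimension at most `d` for `d : ℕ∞`; `d = ⊤` imposes no condition. -/
def ProjDimLE' (R : Type u) [Ring R] (d : ℕ∞) (M : Type u) [AddCommGroup M] [Module R M] : Prop :=
  ∀ k : ℕ, (k : ℕ∞) = d → ProjDimLE R k M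

/-- `Ext¹_R(M, N) = 0`, expressed by the splitting of all extensions of `M` by `N`. -/
def Ext1Zero (R : Type u) [Ring R] (M N : Type u) [AddCommGroup M] [Module R M]
    [AddCommGroup N] [Module R N] : Prop :=
  ∀ (X : Type u) [AddCommGroup X] [Module R X] (i : N →ₗ[R] X) (p : X →ₗ[R] M),
    Function.Injective i → Function.Surjective p → LinearMap.range i = LinearMap.ker p →
    ∃ r : X →ₗ[R] N, r ∘ₗ i = LinearMap.id

/-- `N` is `FPₙ^{≤d}`-injective: `Ext¹_R(K, N) = 0` for every finitely `n`-presented `K`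
of projective dimension at most `d`. -/
def FPdInj (R : Type u) [Ring R] (n : ℕ) (d : ℕ∞) (N : Type u)
    [AddCommGroup N] [Module R N] : Prop :=
  ∀ (K : Type u) [AddCommGroup K] [Module R K],
    FinNPres R n K → ProjDimLE' R d K → Ext1Zero R K N

/-- `M` is `FPₙ^{≤d}`-projective: `Ext¹_R(M, N) = 0` for every `FPₙ^{≤d}`-injective `N`. -/
def FPdProj (R : Type u) [Ring R] (n : ℕ) (d : ℕ∞) (M : Type u)
    [AddCommGroup M] [Module R M] : Prop :=
  ∀ (N : Type u) [AddCommGroup N] [Module R N], FPdInj R n d N → Ext1Zero R M N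

/-- `R` is a left `(n,d)`-coherent ring. -/
def NDCohRing (R : Type u) [Ring R] (n : ℕ) (d : ℕ∞) : Prop :=
  ∀ (M : Type u) [AddCommGroup M] [Module R M],
    FinNPres R n M → ProjDimLE' R d M → FinNPres R (n + 1) M

/-!
Induct on the projective dimension `e ≤ d` of a finitely `n`-presented `M`. By `(n,d)`-coherence
`M` has a presentation `0 → K → Rᵏ → M → 0` with `K` finitely `n`-presented, and `pd K ≤ e - 1`,
so `K` is finitely generated projective by induction, hence a retract of some `Rᵐ`.
Self-injectivity gives `Ext¹(M, R) = 0`, so `Ext¹(M, Rᵐ) = 0` and `Ext¹(M, K) = 0`: the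
presentation splits and `M` is projective.
-/

open CategoryTheory

section ProjDim

variable {R : Type u} [Ring R] {M : Type u} [AddCommGroup M] [Module R M]

theorem projDimLE_iff_hasProjectiveDimensionLE {e : ℕ} :
    ProjDimLE R e M ↔ HasProjectiveDimensionLE (ModuleCat.of R M) e := by
  induction e generalizing M with
  | zero =>
    rw [← projective_iff_hasProjectiveDimensionLE_zero, ← IsProjective.iff_projective]
    rfl
  | succ e ih =>
    constructor
    · rintro ⟨ι, f, hf, hker⟩
      have := (f.shortExact_shortComplexKer hf).hasProjectiveDimensionLT_X₃_iff e
        ((IsProjective.iff_projective _).mp inferInstance)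
      exact this.mpr (ih.mp hker)
    · intro h
      let f : (M →₀ R) →ₗ[R] M := Finsupp.linearCombination R id
      have hf : Function.Surjective f := fun x => ⟨Finsupp.single x 1, by simp [f]⟩
      have := (f.shortExact_shortComplexKer hf).hasProjectiveDimensionLT_X₃_iff e
        ((IsProjective.iff_projective _).mp inferInstance)
      exact ⟨M, f, hf, ih.mpr (this.mp h)⟩

theorem ProjDimLE.mono {e e' : ℕ} (h : ProjDimLE R e M) (hee' : e ≤ e') : ProjDimLE R e' M := by
  rw [projDimLE_iff_hasProjectiveDimensionLE] at h ⊢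
  exact hasProjectiveDimensionLT_of_ge _ (e + 1) (e' + 1) (by omega)

theorem ProjDimLE.of_projective [Module.Projective R M] (e : ℕ) : ProjDimLE R e M :=
  ProjDimLE.mono (e := 0) ‹_› e.zero_le

theorem ProjDimLE.ker_of_surjective {e : ℕ} (h : ProjDimLE R (e + 1) M) {P : Type u}
    [AddCommGroup P] [Module R P] [Module.Projective R P] (f : P →ₗ[R] M)
    (hf : Function.Surjective f) : ProjDimLE R e (LinearMap.ker f) := by
  rw [projDimLE_iff_hasProjectiveDimensionLE] at h ⊢
  exact ((f.shortExact_shortComplexKer hf).hasProjectiveDimensionLT_X₃_iff e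
    ((IsProjective.iff_projective _).mp inferInstance)).mp h

end ProjDim

section Ext1

variable {R : Type u} [Ring R] {M N N' X : Type u} [AddCommGroup M] [Module R M]
  [AddCommGroup N] [Module R N] [AddCommGroup N'] [Module R N'] [AddCommGroup X] [Module R X]

theorem Ext1Zero.exists_comp_eq (h : Ext1Zero R M N') (i : N →ₗ[R] X) (p : X →ₗ[R] M)
    (hi : Function.Injective i) (hp : Function.Surjective p)
    (hip : LinearMap.range i = LinearMap.ker p) (φ : N →ₗ[R] N') :
    ∃ t : X →ₗ[R] N', t ∘ₗ i = φ := by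
  have hpi : ∀ n, p (i n) = 0 := fun n => by
    rw [← LinearMap.mem_ker, ← hip]; exact ⟨n, rfl⟩
  -- the pushout of `i` along `φ`
  let S := LinearMap.range (φ.prod (-i))
  let i' : N' →ₗ[R] (N' × X) ⧸ S := S.mkQ ∘ₗ LinearMap.inl R N' X
  let p' : (N' × X) ⧸ S →ₗ[R] M := S.liftQ (p ∘ₗ LinearMap.snd R N' X) <| by
    rintro _ ⟨n, rfl⟩
    simp [hpi]
  have glue : ∀ n, S.mkQ (0, i n) = i' (φ n) := fun n => by
    refine (Submodule.Quotient.eq S).mpr ⟨-n, ?_⟩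
    simp
  have hi' : Function.Injective i' := by
    refine (injective_iff_map_eq_zero i').mpr fun a ha => ?_
    obtain ⟨n, hn⟩ := (Submodule.Quotient.mk_eq_zero S).mp ha
    obtain ⟨hφ, hin⟩ := Prod.ext_iff.mp hn
    simp only [LinearMap.prod_apply, Function.prod, LinearMap.neg_apply, LinearMap.inl_apply,
      neg_eq_zero] at hφ hin
    rw [← hφ, hi (hin.trans i.map_zero.symm), map_zero]
  have hp' : Function.Surjective p' := fun m => by
    obtain ⟨x, rfl⟩ := hp m
    exact ⟨S.mkQ (0, x), by simp [p']⟩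
  have hip' : LinearMap.range i' = LinearMap.ker p' := by
    apply le_antisymm
    · rintro _ ⟨a, rfl⟩
      simp [i', p']
    · intro y hy
      obtain ⟨⟨a, x⟩, rfl⟩ := S.mkQ_surjective y
      have hx : x ∈ LinearMap.ker p := by simpa [p'] using hy
      obtain ⟨n, rfl⟩ := hip ▸ hx
      refine ⟨a + φ n, ?_⟩
      rw [map_add, ← glue, LinearMap.comp_apply, ← map_add]
      simp
  obtain ⟨r, hr⟩ := h _ i' p' hi' hp' hip'
  refine ⟨r ∘ₗ S.mkQ ∘ₗ LinearMap.inr R N' X, LinearMap.ext fun n => ?_⟩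
  simpa [glue] using LinearMap.congr_fun hr (φ n)

theorem Ext1Zero.pi {ι : Type} (h : Ext1Zero R M N) : Ext1Zero R M (ι → N) := by
  intro X _ _ i p hi hp hip
  choose t ht using fun j => h.exists_comp_eq i p hi hp hip (LinearMap.proj j)
  exact ⟨LinearMap.pi t, LinearMap.ext fun n => funext fun j => LinearMap.congr_fun (ht j) n⟩

theorem Ext1Zero.of_retract (h : Ext1Zero R M N') (s : N →ₗ[R] N') (π : N' →ₗ[R] N)
    (hπs : π ∘ₗ s = LinearMap.id) : Ext1Zero R M N := by
  intro X _ _ i p hi hp hip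
  obtain ⟨t, ht⟩ := h.exists_comp_eq i p hi hp hip s
  exact ⟨π ∘ₗ t, by rw [LinearMap.comp_assoc, ht, hπs]⟩

end Ext1

section FinNPres

variable {R : Type u} [Ring R] {M : Type u} [AddCommGroup M] [Module R M]

theorem FinNPres.finite {n : ℕ} (h : FinNPres R n M) : Module.Finite R M := by
  cases n with
  | zero => exact h
  | succ n =>
    obtain ⟨k, f, hf, -⟩ := h
    exact Module.Finite.of_surjective f hf

theorem FinNPres.of_finite_of_projective (n : ℕ) [Module.Finite R M] [Module.Projective R M] :
    FinNPres R n M := by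
  induction n generalizing M with
  | zero => assumption
  | succ n ih =>
    obtain ⟨k, f, hf⟩ := Module.Finite.exists_fin' R M
    have : Module.FinitePresentation R M := Module.finitePresentation_of_projective R M
    have : Module.Finite R (LinearMap.ker f) :=
      Module.Finite.iff_fg.mpr (Module.FinitePresentation.fg_ker f hf)
    have : Module.Projective R (LinearMap.ker f) :=
      ProjDimLE.ker_of_surjective (e := 0) (.of_projective 1) f hf
    exact ⟨k, f, hf, ih⟩

end FinNPres

theorem projective_of_finNPres_of_projDimLE {R : Type u} [Ring R] {n d : ℕ}
    (hcoh : NDCohRing R n d) (hself : FPdInj R n d R) {e : ℕ} (he : e ≤ d)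
    {M : Type u} [AddCommGroup M] [Module R M] (hfp : FinNPres R n M) (hpd : ProjDimLE R e M) :
    Module.Projective R M := by
  induction e generalizing M with
  | zero => exact hpd
  | succ e ih =>
    have hpd' : ProjDimLE' R d M := fun k hk => Nat.cast_injective hk ▸ hpd.mono he
    obtain ⟨k, f, hf, hker⟩ := hcoh M hfp hpd'
    have : Module.Projective R (LinearMap.ker f) := ih (by omega) hker (hpd.ker_of_surjective f hf)
    have : Module.Finite R (LinearMap.ker f) := hker.finite
    obtain ⟨m, π, s, -, -, hπs⟩ :=
      Module.Finite.exists_comp_eq_id_of_projective R (LinearMap.ker f)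
    have hext : Ext1Zero R M (LinearMap.ker f) :=
      ((hself M hfp hpd').pi (ι := Fin m)).of_retract s π hπs
    obtain ⟨r, hr⟩ := hext _ _ f (LinearMap.ker f).injective_subtype hf (Submodule.range_subtype _)
    have hsplit := ((LinearMap.exact_subtype_ker_map f).split_tfae
      (LinearMap.ker f).injective_subtype hf).out 1 0
    obtain ⟨l, hl⟩ := hsplit.mp ⟨r, hr⟩
    exact Module.Projective.of_split l f hl

theorem fp_n_le_d_eq_proj_of_selfInj_general (R : Type u) [Ring R] (n : ℕ)
    (d : ℕ) (hcoh : NDCohRing R n (d : ℕ∞)) (hself : FPdInj R n (d : ℕ∞) R) :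
    ∀ (M : Type u) [AddCommGroup M] [Module R M],
      (FinNPres R n M ∧ ProjDimLE R d M) ↔ (Module.Finite R M ∧ Module.Projective R M) := by
  intro M _ _
  constructor
  · rintro ⟨hfp, hpd⟩
    exact ⟨hfp.finite, projective_of_finNPres_of_projDimLE hcoh hself le_rfl hfp hpd⟩
  · rintro ⟨_, hproj⟩
    exact ⟨.of_finite_of_projective n, .of_projective d⟩

/-- If `R` is left `(n,d)`-coherent and left self-`FPₙ^{≤d}`-injective with `d` finite, then
`FPₙ^{≤d}(R)` coincides with the class of finitely generated projective `R`-modules. -/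
theorem fp_n_le_d_eq_proj_of_selfInj (R : Type u) [Ring R] (n : ℕ) (hn : 1 ≤ n)
    (d : ℕ) (hd : 1 ≤ d) (hcoh : NDCohRing R n (d : ℕ∞)) (hself : FPdInj R n (d : ℕ∞) R) :
    ∀ (M : Type u) [AddCommGroup M] [Module R M],
      (FinNPres R n M ∧ ProjDimLE R d M) ↔ (Module.Finite R M ∧ Module.Projective R M) :=
  fp_n_le_d_eq_proj_of_selfInj_general R n d hcoh hself
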